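/- arXiv:1910.02205 — 2 statements merged into one kernel-verified Lean document; each statement's English description precedes it below -/
import Mathlib

section
/- Let (X,d) be a metric space and let u, u_1, u_2, ... be fuzzy sets in F_USC(X). Then send u_n Kuratowski converges to send u if and only if u_n Γ-converges to u and [u_n]_0 Kuratowski converges to [u]_0. -/
open Set Filter Metric Topology MeasureTheory

/-- The α-cut of a fuzzy set `u : X → ℝ`: for `α ≠ 0` it is `{x | u x ≥ α}`,
and for `α = 0` it is the closure of `{x | u x > 0}`. -/
noncomputable def cut {X : Type*} [MetricSpace X] (u : X → ℝ) (α : ℝ) : Set X :=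
  if α = 0 then closure {x | 0 < u x} else {x | α ≤ u x}

/-- `u` is a normal upper semicontinuous fuzzy set: it takes values in `[0,1]` and
all α-cuts (`α ∈ [0,1]`) are nonempty and closed. -/
def FUSC {X : Type*} [MetricSpace X] (u : X → ℝ) : Prop :=
  (∀ x, u x ∈ Set.Icc (0:ℝ) 1) ∧
    ∀ α ∈ Set.Icc (0:ℝ) 1, (cut u α).Nonempty ∧ IsClosed (cut u α)

/-- `F_USCG(X)`: fuzzy sets in `F_USC(X)` with compact positive α-cuts. -/
def FUSCG {X : Type*} [MetricSpace X] (u : X → ℝ) : Prop :=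
  FUSC u ∧ ∀ α ∈ Set.Ioc (0:ℝ) 1, IsCompact (cut u α)

/-- `F_USCB(X)`: fuzzy sets in `F_USC(X)` with compact support. -/
def FUSCB {X : Type*} [MetricSpace X] (u : X → ℝ) : Prop :=
  FUSC u ∧ IsCompact (cut u 0)

/-- Kuratowski lower limit of a sequence of sets. -/
def kurLiminf {Y : Type*} [MetricSpace Y] (C : ℕ → Set Y) : Set Y :=
  {y | ∃ f : ℕ → Y, (∀ n, f n ∈ C n) ∧ Tendsto f atTop (𝓝 y)}

/-- Kuratowski upper limit of a sequence of sets. -/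
def kurLimsup {Y : Type*} [MetricSpace Y] (C : ℕ → Set Y) : Set Y :=
  {y | ∃ φ : ℕ → ℕ, StrictMono φ ∧
        ∃ f : ℕ → Y, (∀ n, f n ∈ C (φ n)) ∧ Tendsto f atTop (𝓝 y)}

/-- Kuratowski convergence of a sequence of sets to a set. -/
def KurConv {Y : Type*} [MetricSpace Y] (C : ℕ → Set Y) (D : Set Y) : Prop :=
  kurLiminf C = D ∧ kurLimsup C = D

/-- The endograph of `u`: `{(x,t) ∈ X × [0,1] : u x ≥ t}`. -/
def endo {X : Type*} [MetricSpace X] (u : X → ℝ) : Set (X × ℝ) :=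
  {p | p.2 ∈ Set.Icc (0:ℝ) 1 ∧ p.2 ≤ u p.1}

/-- The sendograph of `u`: `end u ∩ ([u]₀ × [0,1])`. -/
noncomputable def sendo {X : Type*} [MetricSpace X] (u : X → ℝ) : Set (X × ℝ) :=
  endo u ∩ (cut u 0) ×ˢ (Set.Icc (0:ℝ) 1)

/-- Γ-convergence: Kuratowski convergence of endographs. -/
def GammaConv {X : Type*} [MetricSpace X] (un : ℕ → X → ℝ) (u : X → ℝ) : Prop :=
  KurConv (fun n => endo (un n)) (endo u)

/-- The endograph metric. -/
noncomputable def Hend {X : Type*} [MetricSpace X] (u v : X → ℝ) : ℝ :=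
  hausdorffDist (endo u) (endo v)

/-- The sendograph metric. -/
noncomputable def Hsend {X : Type*} [MetricSpace X] (u v : X → ℝ) : ℝ :=
  hausdorffDist (sendo u) (sendo v)

/-- The set of platform points of `u`:
`α ∈ (0,1)` with `closure {u > α}` a proper subset of `[u]_α`. -/
def Pset {X : Type*} [MetricSpace X] (u : X → ℝ) : Set ℝ :=
  {α | α ∈ Set.Ioo (0:ℝ) 1 ∧ closure {x | α < u x} ⊂ cut u α}

/-- `P₀(u)`: the set of `α ∈ (0,1)` such that `H([u]_β, [u]_α)` does not tend to `0`
as `β → α`. -/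
def P0set {X : Type*} [MetricSpace X] (u : X → ℝ) : Set ℝ :=
  {α | α ∈ Set.Ioo (0:ℝ) 1 ∧
    ¬ Tendsto (fun β => hausdorffDist (cut u β) (cut u α)) (𝓝[≠] α) (𝓝 0)}



section aux
variable {X : Type*} [MetricSpace X]

lemma cut_zero (u : X → ℝ) : cut u 0 = closure {x | 0 < u x} := if_pos rfl

lemma mem_cut_zero_of_pos {u : X → ℝ} {x : X} (h : 0 < u x) : x ∈ cut u 0 := by
  rw [cut_zero]; exact subset_closure h

lemma sendo_subset_endo (u : X → ℝ) : sendo u ⊆ endo u := inter_subset_left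

lemma zero_mem_endo {u : X → ℝ} (hu : FUSC u) (x : X) : (x, (0:ℝ)) ∈ endo u :=
  ⟨⟨le_rfl, zero_le_one⟩, (hu.1 x).1⟩

lemma mem_sendo_of_zero {u : X → ℝ} (hu : FUSC u) {x : X} (hx : x ∈ cut u 0) :
    (x, (0:ℝ)) ∈ sendo u :=
  ⟨zero_mem_endo hu x, hx, le_rfl, zero_le_one⟩

lemma mem_sendo_of_pos {u : X → ℝ} {p : X × ℝ} (h : p ∈ endo u) (ht : 0 < p.2) :
    p ∈ sendo u :=
  ⟨h, mem_cut_zero_of_pos (lt_of_lt_of_le ht h.2), h.1⟩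

lemma kurLiminf_subset_kurLimsup' {Y : Type*} [MetricSpace Y] (C : ℕ → Set Y) :
    kurLiminf C ⊆ kurLimsup C := fun _ ⟨f, hf, ht⟩ => ⟨id, strictMono_id, f, hf, ht⟩

lemma tendsto_of_mem_pair {Y : Type*} [MetricSpace Y] {g h f : ℕ → Y} {y : Y}
    (hg : Tendsto g atTop (𝓝 y)) (hh : Tendsto h atTop (𝓝 y))
    (hf : ∀ n, f n = g n ∨ f n = h n) : Tendsto f atTop (𝓝 y) := by
  rw [Metric.tendsto_atTop] at *
  intro ε hε
  obtain ⟨N1, h1⟩ := hg ε hε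
  obtain ⟨N2, h2⟩ := hh ε hε
  refine ⟨max N1 N2, fun n hn => ?_⟩
  rcases hf n with h | h <;> rw [h]
  · exact h1 n (le_trans (le_max_left _ _) hn)
  · exact h2 n (le_trans (le_max_right _ _) hn)

end aux

theorem sendograph_kuratowski_conv_iff_gamma_and_support
    {X : Type*} [MetricSpace X] (u : X → ℝ) (un : ℕ → X → ℝ)
    (hu : FUSC u) (hun : ∀ n, FUSC (un n)) :
    KurConv (fun n => sendo (un n)) (sendo u) ↔
      GammaConv un u ∧ KurConv (fun n => cut (un n) 0) (cut u 0) := by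
  constructor
  · rintro ⟨hli, hls⟩
    -- Forward direction
    have hsub1 : endo u ⊆ kurLiminf (fun n => endo (un n)) := by
      rintro ⟨x, t⟩ ⟨⟨ht0, ht1⟩, htu⟩
      rcases eq_or_lt_of_le ht0 with h | h
      · refine ⟨fun _ => (x, 0), fun n => zero_mem_endo (hun n) x, ?_⟩
        have ht : t = 0 := h.symm
        subst ht; exact tendsto_const_nhds
      · have hmem : (x, t) ∈ kurLiminf (fun n => sendo (un n)) := by
          rw [hli]; exact mem_sendo_of_pos ⟨⟨ht0, ht1⟩, htu⟩ h
        obtain ⟨f, hf, hft⟩ := hmem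
        exact ⟨f, fun n => sendo_subset_endo _ (hf n), hft⟩
    have hsub2 : kurLimsup (fun n => endo (un n)) ⊆ endo u := by
      rintro ⟨x, t⟩ ⟨φ, hφ, f, hf, hft⟩
      have hx2 : Tendsto (fun j => (f j).2) atTop (𝓝 t) := (continuous_snd.tendsto _).comp hft
      have htmem : t ∈ Set.Icc (0:ℝ) 1 :=
        isClosed_Icc.mem_of_tendsto hx2 (Eventually.of_forall fun j => (hf j).1)
      rcases eq_or_lt_of_le htmem.1 with h | h
      · exact ⟨htmem, by rw [← h]; exact (hu.1 x).1⟩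
      · obtain ⟨N, hN⟩ := eventually_atTop.1 (hx2.eventually (eventually_gt_nhds h))
        have hmem : (x, t) ∈ kurLimsup (fun n => sendo (un n)) := by
          refine ⟨fun j => φ (j + N), fun a b hab => hφ (by omega), fun j => f (j + N),
            fun j => mem_sendo_of_pos (hf (j + N)) (hN _ (by omega)),
            hft.comp (tendsto_add_atTop_nat N)⟩
        rw [hls] at hmem
        exact sendo_subset_endo _ hmem
    have hcsub1 : cut u 0 ⊆ kurLiminf (fun n => cut (un n) 0) := by
      intro x hx
      have hmem : (x, (0:ℝ)) ∈ kurLiminf (fun n => sendo (un n)) := by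
        rw [hli]; exact mem_sendo_of_zero hu hx
      obtain ⟨f, hf, hft⟩ := hmem
      exact ⟨fun n => (f n).1, fun n => (hf n).2.1, (continuous_fst.tendsto _).comp hft⟩
    have hcsub2 : kurLimsup (fun n => cut (un n) 0) ⊆ cut u 0 := by
      rintro x ⟨φ, hφ, g, hg, hgt⟩
      have hmem : (x, (0:ℝ)) ∈ kurLimsup (fun n => sendo (un n)) := by
        refine ⟨φ, hφ, fun j => (g j, 0), fun j => mem_sendo_of_zero (hun _) (hg j),
          hgt.prodMk_nhds tendsto_const_nhds⟩
      rw [hls] at hmem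
      exact hmem.2.1
    exact ⟨⟨subset_antisymm ((kurLiminf_subset_kurLimsup' _).trans hsub2) hsub1,
        subset_antisymm hsub2 (hsub1.trans (kurLiminf_subset_kurLimsup' _))⟩,
      subset_antisymm ((kurLiminf_subset_kurLimsup' _).trans hcsub2) hcsub1,
      subset_antisymm hcsub2 (hcsub1.trans (kurLiminf_subset_kurLimsup' _))⟩
  · rintro ⟨⟨heli, hels⟩, hcli, hcls⟩
    -- Reverse direction
    have hls2 : kurLimsup (fun n => sendo (un n)) ⊆ sendo u := by
      rintro ⟨x, t⟩ ⟨φ, hφ, f, hf, hft⟩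
      have hend : (x, t) ∈ endo u := by
        rw [← hels]
        exact ⟨φ, hφ, f, fun j => sendo_subset_endo _ (hf j), hft⟩
      have hcut : x ∈ cut u 0 := by
        rw [← hcls]
        exact ⟨φ, hφ, fun j => (f j).1, fun j => (hf j).2.1, (continuous_fst.tendsto _).comp hft⟩
      exact ⟨hend, hcut, hend.1⟩
    have hsub : sendo u ⊆ kurLiminf (fun n => sendo (un n)) := by
      rintro ⟨x, t⟩ ⟨hend, hcut, hIcc⟩
      rw [← heli] at hend
      obtain ⟨f, hf, hft⟩ := hend
      rw [← hcli] at hcut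
      obtain ⟨g, hg, hgt⟩ := hcut
      set F : ℕ → X × ℝ := fun n => if 0 < (f n).2 then f n else (g n, 0) with hF
      have hFmem : ∀ n, F n ∈ sendo (un n) := by
        intro n
        by_cases h : 0 < (f n).2
        · simp only [hF, if_pos h]; exact mem_sendo_of_pos (hf n) h
        · simp only [hF, if_neg h]; exact mem_sendo_of_zero (hun n) (hg n)
      have hFalt : ∀ n, F n = f n ∨ F n = (g n, 0) := by
        intro n
        by_cases h : 0 < (f n).2
        · left; simp [hF, h]
        · right; simp [hF, h]
      rcases eq_or_lt_of_le hIcc.1 with h | h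
      · subst h
        exact ⟨F, hFmem, tendsto_of_mem_pair hft (hgt.prodMk_nhds tendsto_const_nhds) hFalt⟩
      · have hx2 : Tendsto (fun j => (f j).2) atTop (𝓝 t) := (continuous_snd.tendsto _).comp hft
        have hev : ∀ᶠ n in atTop, F n = f n := by
          filter_upwards [hx2.eventually (eventually_gt_nhds h)] with n hn
          simp [hF, hn]
        exact ⟨F, hFmem, hft.congr' (hev.mono fun n hn => hn.symm)⟩
    exact ⟨subset_antisymm ((kurLiminf_subset_kurLimsup' _).trans hls2) hsub,
      subset_antisymm hls2 (hsub.trans (kurLiminf_subset_kurLimsup' _))⟩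
end

section
/- Let (X,d) be a metric space and let U be a subset of F_USCG(X). Then U is relatively compact in (F_USCG(X), H_end) (i.e., every sequence in U has a subsequence that H_end-converges to some element of F_USCG(X)) if and only if U(α) = ⋃_{u∈U} [u]_α is relatively compact in X for each α ∈ (0,1]. -/
open Set Filter Metric Topology MeasureTheory

/-!
If `x n ∈ [u n]_α` and a subsequence of `u n` converges to `v` in `H_end`, then the points
`(x n, α)` of `end (u n)` are eventually close to points of `end v` of height above `α / 2`; so
`x n` approaches the compact cut `[v]_{α/2}` and has a convergent subsequence.

Conversely, at each rational level `q ∈ (0,1]` the cuts `[s n]_q` lie in the compact set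
`closure U(q)`, so, the hyperspace of nonempty compact subsets of a compact set being compact, one
subsequence makes the cuts at all rational levels converge in the Hausdorff metric, to sets `C q`
antitone in `q`. The fuzzy set `v x = sup {q | x ∈ C q}` has cuts `[v]_α = ⋂_{q<α} C q`, and as
finitely many rational levels approximate every height in `[δ, 1]` up to `δ`, the endographs
converge.
-/

lemma Rat.cast_mem_Ioc_zero_one {q : ℚ} (hq : q ∈ Ioc (0:ℚ) 1) : (q : ℝ) ∈ Ioc (0:ℝ) 1 :=
  ⟨by exact_mod_cast hq.1, by exact_mod_cast hq.2⟩

section Cuts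

variable {X : Type*} [MetricSpace X] {u v : X → ℝ} {α : ℝ}

lemma cut_of_ne_zero (hα : α ≠ 0) : cut u α = {x | α ≤ u x} := if_neg hα

lemma mem_cut_of_ne_zero (hα : α ≠ 0) {x : X} : x ∈ cut u α ↔ α ≤ u x := by
  rw [cut_of_ne_zero hα]; rfl

lemma cut_subset_cut (hα : 0 < α) {β : ℝ} (hαβ : α ≤ β) : cut u β ⊆ cut u α := fun x hx => by
  rw [mem_cut_of_ne_zero (hα.trans_le hαβ).ne'] at hx
  exact (mem_cut_of_ne_zero hα.ne').2 (hαβ.trans hx)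

lemma FUSCG.nonneg (hu : FUSCG u) (x : X) : 0 ≤ u x := (hu.1.1 x).1

lemma FUSCG.nonempty_cut (hu : FUSCG u) (hα : α ∈ Icc (0:ℝ) 1) : (cut u α).Nonempty :=
  (hu.1.2 α hα).1

lemma FUSCG.isCompact_cut (hu : FUSCG u) (hα : α ∈ Ioc (0:ℝ) 1) : IsCompact (cut u α) :=
  hu.2 α hα

end Cuts

section Endograph

variable {X : Type*} [MetricSpace X] {u v : X → ℝ}

lemma exists_mem_endo_dist_le_of_le (hv : ∀ x, 0 ≤ v x) (x : X) {t δ : ℝ} (ht : 0 ≤ t)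
    (htδ : t ≤ δ) : ∃ q ∈ endo v, dist (x, t) q ≤ δ :=
  ⟨(x, 0), ⟨⟨le_rfl, zero_le_one⟩, hv x⟩,
    by simp [Prod.dist_eq, abs_of_nonneg ht, htδ, ht.trans htδ]⟩

lemma hausdorffEDist_endo_ne_top (hu : ∀ x, 0 ≤ u x) (hv : ∀ x, 0 ≤ v x) :
    hausdorffEDist (endo u) (endo v) ≠ ⊤ := by
  have near_base : ∀ {w w' : X → ℝ}, (∀ x, 0 ≤ w' x) →
      ∀ p ∈ endo w, ∃ q ∈ endo w', edist p q ≤ 1 := by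
    rintro w w' hw' ⟨x, t⟩ ⟨⟨ht0, ht1⟩, -⟩
    obtain ⟨q, hq, hd⟩ := exists_mem_endo_dist_le_of_le hw' x ht0 ht1
    exact ⟨q, hq, by rwa [← ENNReal.ofReal_one, edist_le_ofReal zero_le_one]⟩
  exact ne_top_of_le_ne_top ENNReal.one_ne_top
    (hausdorffEDist_le_of_mem_edist (near_base hv) (near_base hu))

lemma exists_dist_lt_of_Hend_lt (hu : ∀ x, 0 ≤ u x) (hv : ∀ x, 0 ≤ v x) {x : X} {α η : ℝ}
    (hα : α ∈ Icc (0:ℝ) 1) (hx : α ≤ u x) (h : Hend u v < η) :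
    ∃ y, α - η < v y ∧ dist x y < η := by
  obtain ⟨⟨y, t⟩, ⟨-, hty⟩, hd⟩ :=
    exists_dist_lt_of_hausdorffDist_lt (show (x, α) ∈ endo u from ⟨hα, hx⟩) h
      (hausdorffEDist_endo_ne_top hu hv)
  rw [Prod.dist_eq, max_lt_iff, Real.dist_eq, abs_sub_lt_iff] at hd
  exact ⟨y, by linarith [hd.2.1], hd.1⟩

end Endograph

section Subsequences

variable {X : Type*} [MetricSpace X]

lemma exists_tendsto_subseq_of_tendsto_infDist {K : Set X} (hK : IsCompact K)
    (hne : K.Nonempty) {x : ℕ → X} (h : Tendsto (fun n => infDist (x n) K) atTop (𝓝 0)) :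
    ∃ a ∈ K, ∃ φ : ℕ → ℕ, StrictMono φ ∧ Tendsto (x ∘ φ) atTop (𝓝 a) := by
  choose y hyK hy using fun n => hK.exists_infDist_eq_dist hne (x n)
  obtain ⟨a, haK, φ, hφ, hya⟩ := hK.tendsto_subseq hyK
  refine ⟨a, haK, φ, hφ, hya.congr_dist ?_⟩
  simpa [Function.comp_def, hy, dist_comm] using h.comp hφ.tendsto_atTop

lemma isCompact_closure_of_exists_tendsto_subseq {S : Set X}
    (h : ∀ x : ℕ → X, (∀ n, x n ∈ S) →
      ∃ a, ∃ φ : ℕ → ℕ, StrictMono φ ∧ Tendsto (x ∘ φ) atTop (𝓝 a)) :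
    IsCompact (closure S) := by
  refine IsSeqCompact.isCompact fun x hx => ?_
  choose y hyS hy using fun n : ℕ =>
    Metric.mem_closure_iff.1 (hx n) (1 / (n + 1)) Nat.one_div_pos_of_nat
  obtain ⟨a, φ, hφ, hya⟩ := h y hyS
  refine ⟨a, mem_closure_of_tendsto hya (.of_forall fun n => hyS (φ n)), φ, hφ,
    hya.congr_dist ?_⟩
  refine squeeze_zero (fun _ => dist_nonneg) (fun n => ?_)
    (tendsto_one_div_add_atTop_nhds_zero_nat.comp hφ.tendsto_atTop)
  simpa [dist_comm] using (hy (φ n)).le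

end Subsequences

section Forward

variable {X : Type*} [MetricSpace X]

lemma tendsto_infDist_cut_of_tendsto_Hend {u : ℕ → X → ℝ} {v : X → ℝ} {x : ℕ → X} {α : ℝ}
    (hu : ∀ n x, 0 ≤ u n x) (hv : ∀ x, 0 ≤ v x) (hα : α ∈ Ioc (0:ℝ) 1)
    (hx : ∀ n, x n ∈ cut (u n) α) (h : Tendsto (fun n => Hend (u n) v) atTop (𝓝 0)) :
    Tendsto (fun n => infDist (x n) (cut v (α / 2))) atTop (𝓝 0) := by
  refine tendsto_order.2 ⟨fun a ha => .of_forall fun n => ha.trans_le infDist_nonneg,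
    fun η hη => ?_⟩
  filter_upwards [h.eventually_lt_const (lt_min hη (half_pos hα.1))] with n hn
  obtain ⟨y, hy, hxy⟩ := exists_dist_lt_of_Hend_lt (hu n) hv (Ioc_subset_Icc_self hα)
    ((mem_cut_of_ne_zero hα.1.ne').1 (hx n)) hn
  have hy : y ∈ cut v (α / 2) := by
    rw [mem_cut_of_ne_zero (half_pos hα.1).ne']
    linarith [min_le_right η (α / 2)]
  exact (infDist_le_dist_of_mem hy).trans_lt (hxy.trans_le (min_le_left _ _))

theorem isCompact_closure_iUnion_cut_of_forall_exists_tendsto_Hend {U : Set (X → ℝ)}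
    (hU : ∀ u ∈ U, FUSCG u)
    (h : ∀ s : ℕ → X → ℝ, (∀ n, s n ∈ U) →
        ∃ v : X → ℝ, FUSCG v ∧ ∃ φ : ℕ → ℕ, StrictMono φ ∧
          Tendsto (fun n => Hend (s (φ n)) v) atTop (𝓝 0))
    {α : ℝ} (hα : α ∈ Ioc (0:ℝ) 1) :
    IsCompact (closure (⋃ u ∈ U, cut u α)) := by
  refine isCompact_closure_of_exists_tendsto_subseq fun x hx => ?_
  choose u huU hxu using fun n => mem_iUnion₂.1 (hx n)
  obtain ⟨v, hv, φ, hφ, hconv⟩ := h u huU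
  have hα2 : α / 2 ∈ Ioc (0:ℝ) 1 := ⟨half_pos hα.1, by linarith [hα.2]⟩
  obtain ⟨a, -, ψ, hψ, hlim⟩ := exists_tendsto_subseq_of_tendsto_infDist
    (hv.isCompact_cut hα2) (hv.nonempty_cut (Ioc_subset_Icc_self hα2))
    (tendsto_infDist_cut_of_tendsto_Hend (fun n => (hU _ (huU (φ n))).nonneg) hv.nonneg hα
      (fun n => hxu (φ n)) hconv)
  exact ⟨a, φ ∘ ψ, hφ.comp hψ, hlim⟩

end Forward

section Selection

open TopologicalSpace

variable {X : Type*} [MetricSpace X]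

lemma TopologicalSpace.NonemptyCompacts.subset_of_tendsto {ι : Type*} {l : Filter ι} [l.NeBot]
    {A B : ι → NonemptyCompacts X} {C D : NonemptyCompacts X}
    (hAB : ∀ n, (A n : Set X) ⊆ B n) (hA : Tendsto A l (𝓝 C)) (hB : Tendsto B l (𝓝 D)) :
    (C : Set X) ⊆ D := by
  intro x hx
  have hcont := (lipschitz_infDist_set (α := X) x).continuous
  have hle : infDist x D ≤ infDist x C :=
    le_of_tendsto_of_tendsto' ((hcont.tendsto _).comp hB) ((hcont.tendsto _).comp hA)
      fun n => infDist_le_infDist_of_subset (hAB n) (A n).nonempty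
  rw [D.isCompact.isClosed.mem_iff_infDist_zero D.nonempty]
  linarith [infDist_zero_of_mem hx, infDist_nonneg (x := x) (s := D)]

lemma exists_subseq_tendsto_of_subset_isCompact {ι : Type*} [Countable ι] {K : ι → Set X}
    (hK : ∀ i, IsCompact (K i)) (F : ℕ → ι → NonemptyCompacts X)
    (hFK : ∀ n i, (F n i : Set X) ⊆ K i) :
    ∃ C : ι → NonemptyCompacts X, ∃ φ : ℕ → ℕ, StrictMono φ ∧
      ∀ i, Tendsto (fun n => F (φ n) i) atTop (𝓝 (C i)) := by
  obtain ⟨C, -, φ, hφ, hC⟩ :=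
    (isCompact_univ_pi fun i => NonemptyCompacts.isCompact_subsets_of_isCompact (hK i)
      ).tendsto_subseq (x := F) fun n => mem_univ_pi.2 (hFK n)
  exact ⟨C, φ, hφ, tendsto_pi_nhds.1 hC⟩

end Selection

section RatCuts

open TopologicalSpace

variable {X : Type*} [MetricSpace X] {C : Ioc (0:ℚ) 1 → NonemptyCompacts X} {x : X} {α : ℝ}

def ratCutLevels (C : Ioc (0:ℚ) 1 → NonemptyCompacts X) (x : X) : Set ℝ :=
  insert 0 ((fun q : Ioc (0:ℚ) 1 => ((q : ℚ) : ℝ)) '' {q | x ∈ C q})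

noncomputable def fuzzyOfRatCuts (C : Ioc (0:ℚ) 1 → NonemptyCompacts X) (x : X) : ℝ :=
  sSup (ratCutLevels C x)

lemma ratCutLevels_subset_Iic_one : ratCutLevels C x ⊆ Iic (1:ℝ) := by
  rintro t (rfl | ⟨q, -, rfl⟩)
  exacts [zero_le_one (α := ℝ), (Rat.cast_mem_Ioc_zero_one q.2).2]

lemma fuzzyOfRatCuts_mem_Icc (C : Ioc (0:ℚ) 1 → NonemptyCompacts X) (x : X) :
    fuzzyOfRatCuts C x ∈ Icc (0:ℝ) 1 :=
  ⟨le_csSup ⟨1, ratCutLevels_subset_Iic_one⟩ (mem_insert _ _),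
    csSup_le (insert_nonempty _ _) ratCutLevels_subset_Iic_one⟩

lemma le_fuzzyOfRatCuts {q : Ioc (0:ℚ) 1} (hx : x ∈ C q) : ((q : ℚ) : ℝ) ≤ fuzzyOfRatCuts C x :=
  le_csSup ⟨1, ratCutLevels_subset_Iic_one⟩ (mem_insert_of_mem _ ⟨q, hx, rfl⟩)

lemma mem_of_lt_fuzzyOfRatCuts (hC : Antitone C) {q : Ioc (0:ℚ) 1}
    (hq : ((q : ℚ) : ℝ) < fuzzyOfRatCuts C x) : x ∈ C q := by
  obtain ⟨t, ht, hqt⟩ := exists_lt_of_lt_csSup (insert_nonempty _ _) hq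
  rcases ht with rfl | ⟨r, hx, rfl⟩
  · exact absurd hqt (Rat.cast_mem_Ioc_zero_one q.2).1.not_gt
  · have hqr : q ≤ r := Subtype.coe_le_coe.1 (Rat.cast_le.1 hqt.le)
    exact hC hqr hx

lemma le_fuzzyOfRatCuts_iff (hC : Antitone C) (hα : α ∈ Ioc (0:ℝ) 1) :
    α ≤ fuzzyOfRatCuts C x ↔ ∀ q : Ioc (0:ℚ) 1, ((q : ℚ) : ℝ) < α → x ∈ C q := by
  refine ⟨fun h q hq => mem_of_lt_fuzzyOfRatCuts hC (hq.trans_le h), fun h => ?_⟩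
  refine le_of_forall_lt fun c hc => ?_
  obtain ⟨r, hcr, hrα⟩ := exists_rat_btwn (max_lt hc hα.1)
  have hr : r ∈ Ioc (0:ℚ) 1 :=
    ⟨by exact_mod_cast (le_max_right c 0).trans_lt hcr, by exact_mod_cast hrα.le.trans hα.2⟩
  exact ((le_max_left c 0).trans_lt hcr).trans_le (le_fuzzyOfRatCuts (h ⟨r, hr⟩ hrα))

lemma cut_fuzzyOfRatCuts (hC : Antitone C) (hα : α ∈ Ioc (0:ℝ) 1) :
    cut (fuzzyOfRatCuts C) α = ⋂ q : {q : Ioc (0:ℚ) 1 // ((q : ℚ) : ℝ) < α}, (C q : Set X) := by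
  ext x
  rw [mem_cut_of_ne_zero hα.1.ne', le_fuzzyOfRatCuts_iff hC hα, mem_iInter]
  exact ⟨fun h q => h q q.2, fun h q hq => h ⟨q, hq⟩⟩

lemma cut_fuzzyOfRatCuts_nonempty_isCompact (hC : Antitone C) (hα : α ∈ Ioc (0:ℝ) 1) :
    (cut (fuzzyOfRatCuts C) α).Nonempty ∧ IsCompact (cut (fuzzyOfRatCuts C) α) := by
  obtain ⟨r, hr0, hrα⟩ := exists_rat_btwn hα.1
  have hr : r ∈ Ioc (0:ℚ) 1 := ⟨by exact_mod_cast hr0, by exact_mod_cast hrα.le.trans hα.2⟩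
  let q₀ : {q : Ioc (0:ℚ) 1 // ((q : ℚ) : ℝ) < α} := ⟨⟨r, hr⟩, hrα⟩
  have hanti : Antitone fun q : {q : Ioc (0:ℚ) 1 // ((q : ℚ) : ℝ) < α} => (C q : Set X) :=
    fun _ _ h => SetLike.coe_subset_coe.2 (hC h)
  have hclosed : IsClosed (⋂ q : {q : Ioc (0:ℚ) 1 // ((q : ℚ) : ℝ) < α}, (C q : Set X)) :=
    isClosed_iInter fun q => (C q).isCompact.isClosed
  rw [cut_fuzzyOfRatCuts hC hα]
  have : Nonempty {q : Ioc (0:ℚ) 1 // ((q : ℚ) : ℝ) < α} := ⟨q₀⟩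
  exact ⟨IsCompact.nonempty_iInter_of_directed_nonempty_isCompact_isClosed _ hanti.directed_ge
      (fun q => (C q).nonempty) (fun q => (C q).isCompact) (fun q => (C q).isCompact.isClosed),
    (C q₀).isCompact.of_isClosed_subset hclosed (iInter_subset _ q₀)⟩

theorem fuscg_fuzzyOfRatCuts (hC : Antitone C) : FUSCG (fuzzyOfRatCuts C) := by
  have hpos := fun α (hα : α ∈ Ioc (0:ℝ) 1) => cut_fuzzyOfRatCuts_nonempty_isCompact hC hα
  refine ⟨⟨fuzzyOfRatCuts_mem_Icc C, fun α hα => ?_⟩, fun α hα => (hpos α hα).2⟩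
  rcases hα.1.eq_or_lt with rfl | hα0
  · obtain ⟨x, hx⟩ := (hpos 1 ⟨one_pos, le_rfl⟩).1
    rw [mem_cut_of_ne_zero one_ne_zero] at hx
    rw [cut, if_pos rfl]
    exact ⟨⟨x, subset_closure (zero_lt_one.trans_le hx)⟩, isClosed_closure⟩
  · exact ⟨(hpos α ⟨hα0, hα.2⟩).1, (hpos α ⟨hα0, hα.2⟩).2.isClosed⟩

end RatCuts

lemma exists_finset_ratLevels_lt_lt_add {δ : ℝ} (hδ : 0 < δ) :
    ∃ G : Finset (Ioc (0:ℚ) 1), ∀ t ∈ Icc δ 1, ∃ q ∈ G, ((q : ℚ) : ℝ) < t ∧ t < q + δ := by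
  obtain ⟨G, hG⟩ := (isCompact_Icc (a := δ) (b := 1)).elim_finite_subcover
    (fun q : Ioc (0:ℚ) 1 => Ioo ((q : ℚ) : ℝ) (q + δ)) (fun _ => isOpen_Ioo) fun t ht => by
      obtain ⟨r, hr, hrt⟩ := exists_rat_btwn (max_lt (hδ.trans_le ht.1) (sub_lt_self t hδ))
      have hr' : r ∈ Ioc (0:ℚ) 1 :=
        ⟨by exact_mod_cast (le_max_left _ _).trans_lt hr, by exact_mod_cast hrt.le.trans ht.2⟩
      exact mem_iUnion.2 ⟨⟨r, hr'⟩, hrt, by linarith [(le_max_right 0 (t - δ)).trans_lt hr]⟩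
  refine ⟨G, fun t ht => ?_⟩
  obtain ⟨q, hq, hmem⟩ := mem_iUnion₂.1 (hG ht)
  exact ⟨q, hq, hmem⟩

section Backward

open TopologicalSpace

variable {X : Type*} [MetricSpace X] {C : Ioc (0:ℚ) 1 → NonemptyCompacts X}

lemma dist_mk_le_of_lt_of_lt_add {x y : X} {s t δ : ℝ} (hxy : dist x y ≤ δ) (hst : s < t)
    (hts : t < s + δ) : dist (x, t) (y, s) ≤ δ := by
  rw [Prod.dist_eq, Real.dist_eq, abs_of_pos (sub_pos.2 hst)]
  exact max_le hxy (by linarith)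

lemma Hend_fuzzyOfRatCuts_le {u : X → ℝ} (hu : FUSCG u) (hC : Antitone C) {δ : ℝ}
    (hδ : 0 < δ) {G : Finset (Ioc (0:ℚ) 1)}
    (hG : ∀ t ∈ Icc δ 1, ∃ q ∈ G, ((q : ℚ) : ℝ) < t ∧ t < q + δ)
    (hcut : ∀ q ∈ G, hausdorffDist (cut u q) (C q) < δ) :
    Hend u (fuzzyOfRatCuts C) ≤ δ := by
  have hfin (q : Ioc (0:ℚ) 1) : hausdorffEDist (cut u q) (C q) ≠ ⊤ :=
    have hq := Rat.cast_mem_Ioc_zero_one q.2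
    hausdorffEDist_ne_top_of_nonempty_of_bounded (hu.nonempty_cut (Ioc_subset_Icc_self hq))
      (C q).nonempty (hu.isCompact_cut hq).isBounded (C q).isCompact.isBounded
  refine hausdorffDist_le_of_mem_dist hδ.le ?_ ?_
  · rintro ⟨x, t⟩ ⟨⟨ht0, ht1⟩, htu⟩
    rcases le_or_gt t δ with htδ | hδt
    · exact exists_mem_endo_dist_le_of_le (fun y => (fuzzyOfRatCuts_mem_Icc C y).1) x ht0 htδ
    obtain ⟨q, hqG, hqt, htq⟩ := hG t ⟨hδt.le, ht1⟩
    have hq := Rat.cast_mem_Ioc_zero_one q.2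
    obtain ⟨y, hy, hxy⟩ := exists_dist_lt_of_hausdorffDist_lt
      ((mem_cut_of_ne_zero hq.1.ne').2 (hqt.le.trans htu)) (hcut q hqG) (hfin q)
    exact ⟨(y, q), ⟨Ioc_subset_Icc_self hq, le_fuzzyOfRatCuts hy⟩,
      dist_mk_le_of_lt_of_lt_add hxy.le hqt htq⟩
  · rintro ⟨x, t⟩ ⟨⟨ht0, ht1⟩, htv⟩
    rcases le_or_gt t δ with htδ | hδt
    · exact exists_mem_endo_dist_le_of_le hu.nonneg x ht0 htδ
    obtain ⟨q, hqG, hqt, htq⟩ := hG t ⟨hδt.le, ht1⟩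
    have hq := Rat.cast_mem_Ioc_zero_one q.2
    obtain ⟨y, hy, hxy⟩ := exists_dist_lt_of_hausdorffDist_lt'
      (mem_of_lt_fuzzyOfRatCuts hC (hqt.trans_le htv)) (hcut q hqG) (hfin q)
    exact ⟨(y, q), ⟨Ioc_subset_Icc_self hq, (mem_cut_of_ne_zero hq.1.ne').1 hy⟩,
      dist_mk_le_of_lt_of_lt_add (dist_comm x y ▸ hxy.le) hqt htq⟩

theorem tendsto_Hend_fuzzyOfRatCuts {s : ℕ → X → ℝ} (hs : ∀ n, FUSCG (s n)) (hC : Antitone C)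
    (h : ∀ q : Ioc (0:ℚ) 1, Tendsto (fun n => hausdorffDist (cut (s n) q) (C q)) atTop (𝓝 0)) :
    Tendsto (fun n => Hend (s n) (fuzzyOfRatCuts C)) atTop (𝓝 0) := by
  refine tendsto_order.2 ⟨fun a ha => .of_forall fun n => ha.trans_le hausdorffDist_nonneg,
    fun ε hε => ?_⟩
  obtain ⟨G, hG⟩ := exists_finset_ratLevels_lt_lt_add (half_pos hε)
  filter_upwards [(eventually_all_finset G).2 fun q _ => (h q).eventually_lt_const (half_pos hε)]
    with n hn
  exact (Hend_fuzzyOfRatCuts_le (hs n) hC (half_pos hε) hG hn).trans_lt (half_lt_self hε)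

theorem exists_subseq_tendsto_Hend_of_isCompact_closure_iUnion_cut {U : Set (X → ℝ)}
    (hU : ∀ u ∈ U, FUSCG u)
    (h : ∀ α ∈ Ioc (0:ℝ) 1, IsCompact (closure (⋃ u ∈ U, cut u α)))
    {s : ℕ → X → ℝ} (hs : ∀ n, s n ∈ U) :
    ∃ v : X → ℝ, FUSCG v ∧ ∃ φ : ℕ → ℕ, StrictMono φ ∧
      Tendsto (fun n => Hend (s (φ n)) v) atTop (𝓝 0) := by
  let F : ℕ → Ioc (0:ℚ) 1 → NonemptyCompacts X := fun n q =>
    ⟨⟨cut (s n) q, (hU _ (hs n)).isCompact_cut (Rat.cast_mem_Ioc_zero_one q.2)⟩,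
      (hU _ (hs n)).nonempty_cut (Ioc_subset_Icc_self (Rat.cast_mem_Ioc_zero_one q.2))⟩
  obtain ⟨C, φ, hφ, hC⟩ := exists_subseq_tendsto_of_subset_isCompact
    (fun q => h _ (Rat.cast_mem_Ioc_zero_one q.2)) F
    fun n q => subset_closure.trans' (subset_biUnion_of_mem (u := fun u => cut u _) (hs n))
  have hCanti : Antitone C := fun q r hqr => SetLike.coe_subset_coe.1 <|
    NonemptyCompacts.subset_of_tendsto
      (fun n => cut_subset_cut (Rat.cast_mem_Ioc_zero_one q.2).1 (by exact_mod_cast hqr))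
      (hC r) (hC q)
  exact ⟨_, fuscg_fuzzyOfRatCuts hCanti, φ, hφ, tendsto_Hend_fuzzyOfRatCuts
    (fun n => hU _ (hs (φ n))) hCanti fun q => tendsto_iff_dist_tendsto_zero.1 (hC q)⟩

end Backward

theorem relatively_compact_FUSCG_iff_cuts_relatively_compact
    {X : Type*} [MetricSpace X] (U : Set (X → ℝ)) (hU : ∀ u ∈ U, FUSCG u) :
    (∀ s : ℕ → X → ℝ, (∀ n, s n ∈ U) →
        ∃ v : X → ℝ, FUSCG v ∧ ∃ φ : ℕ → ℕ, StrictMono φ ∧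
          Tendsto (fun n => Hend (s (φ n)) v) atTop (𝓝 0)) ↔
      ∀ α ∈ Set.Ioc (0:ℝ) 1, IsCompact (closure (⋃ u ∈ U, cut u α)) :=
  ⟨fun h _ hα => isCompact_closure_iUnion_cut_of_forall_exists_tendsto_Hend hU h hα,
    fun h _ hs => exists_subseq_tendsto_Hend_of_isCompact_closure_iUnion_cut hU h hs⟩
end
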